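/- For every integer m ≥ 1 and every x ≥ 0, E[N(x)^m] < ∞, and moreover sup_{0 ≤ y ≤ x} E[N(y)^m] < ∞. In fact, for every q ≥ 1 with φ(q) ≤ 1 and every y ≥ b, one has the tail bound P(N(x) > y) ≤ x^q φ(q)^{−2} y^{log_b φ(q)}. -/

import Mathlib

open MeasureTheory ProbabilityTheory Filter Asymptotics Complex Set

noncomputable section

/-- `x ^ z` for real `x ≥ 0` and complex `z`, with the convention `0 ^ z = 0`. -/
def cpow0 (x : ℝ) (z : ℂ) : ℂ := if x = 0 then 0 else (x : ℂ) ^ z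

/-- The weight `∏_{i=1}^k V_{j_i}^{(j_1 ⋯ j_{i-1})}` attached to a node of the infinite
`b`-ary tree.  Nodes are coded as lists of digits, the head being the *last* step, so the
parent of `j :: J` is `J`, and the splitting vector used at node `J` is `W J`. -/
def nodeWeight {b : ℕ} (W : List (Fin b) → Fin b → ℝ) : List (Fin b) → ℝ
  | [] => 1
  | j :: J => nodeWeight W J * W J j

/-- The number of fragmentation events starting from an object of size `x`: the number of
nodes of the fragmentation tree whose piece has size `≥ 1`. -/
def fragCount {b : ℕ} (W : List (Fin b) → Fin b → ℝ) (x : ℝ) : ℕ :=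
  Set.ncard {J : List (Fin b) | 1 ≤ x * nodeWeight W J}

/-- The fragmentation count `N(x)` as a random variable, built from a family `W` of
independent copies of the splitting vector, indexed by the nodes of the tree. -/
def fragN {Ω : Type*} {b : ℕ} (W : List (Fin b) → Fin b → Ω → ℝ) (x : ℝ) (ω : Ω) : ℕ :=
  fragCount (fun J j => W J j ω) x

variable {Ω : Type*} [MeasurableSpace Ω]

/-- `φ(z) = ∑_j E[V_j^z]`, with the convention `0^z = 0`. -/
def phiF (P : Measure Ω) {b : ℕ} (V : Fin b → Ω → ℝ) (z : ℂ) : ℂ :=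
  ∑ j, ∫ ω, cpow0 (V j ω) z ∂P

/-- `α = ∑_j E[-V_j ln V_j]`, the expected entropy of the splitting vector. -/
def alphaF (P : Measure Ω) {b : ℕ} (V : Fin b → Ω → ℝ) : ℝ :=
  ∑ j, ∫ ω, -(V j ω * Real.log (V j ω)) ∂P

/-- `ψ(z,w) = Cov(∑_j V_j^z, ∑_j V_j^w)`. -/
def psiF (P : Measure Ω) {b : ℕ} (V : Fin b → Ω → ℝ) (z w : ℂ) : ℂ :=
  (∫ ω, (∑ j, cpow0 (V j ω) z) * (∑ j, cpow0 (V j ω) w) ∂P) - phiF P V z * phiF P V w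

/-- Condition A: each `V_j` has a distribution which is absolutely continuous on `(0,1)`
(a point mass at `0` being allowed). -/
def ConditionA (P : Measure Ω) {b : ℕ} (V : Fin b → Ω → ℝ) : Prop :=
  ∀ j, (Measure.map (V j) P).restrict (Set.Ioo (0:ℝ) 1) ≪ (volume : Measure ℝ)

/-- The (topological) support of a measure on `Fin b → ℝ`. -/
def measSupport {b : ℕ} (μ : Measure (Fin b → ℝ)) : Set (Fin b → ℝ) :=
  {v | ∀ U : Set (Fin b → ℝ), IsOpen U → v ∈ U → 0 < μ U}

/-- Condition A′: the support of the distribution of `V` on the standard simplex has an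
interior point (in the subspace topology of the simplex). -/
def ConditionA' (P : Measure Ω) {b : ℕ} (V : Fin b → Ω → ℝ) : Prop :=
  ∃ v ∈ stdSimplex ℝ (Fin b), ∃ U : Set (Fin b → ℝ), IsOpen U ∧ v ∈ U ∧
    U ∩ stdSimplex ℝ (Fin b) ⊆ measSupport (Measure.map (fun ω j => V j ω) P)

/-- Condition B(δ): `limsup_{t → ∞} |φ(δ + i t)| < 1`. -/
def ConditionB (P : Measure Ω) {b : ℕ} (V : Fin b → Ω → ℝ) (δ : ℝ) : Prop :=
  Filter.limsup (fun t : ℝ => ‖phiF P V (δ + t * Complex.I)‖) atTop < 1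

/-- The minimal `L²` (Wasserstein-2) distance between two laws. -/
def ell2 {E : Type*} [MeasurableSpace E] [NormedAddCommGroup E] (μ ν : Measure E) : ℝ :=
  sInf {c | ∃ π : Measure (E × E), π.map Prod.fst = μ ∧ π.map Prod.snd = ν ∧
    c = (∫ p, ‖p.1 - p.2‖ ^ 2 ∂π) ^ (1/2 : ℝ)}

end

noncomputable section
/-- `φ(q) = ∑_j E[V_j^q]` for real `q`, with the convention `0^q = 0`. -/
def phiR {Ω : Type*} [MeasurableSpace Ω] (P : Measure Ω) {b : ℕ}
    (V : Fin b → Ω → ℝ) (q : ℝ) : ℝ :=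
  ∑ j, ∫ ω, (if V j ω = 0 then 0 else V j ω ^ q) ∂P
end

open scoped ENNReal
set_option linter.unusedVariables false


noncomputable section FragAuxiliary

def fragPw (q t : ℝ) : ℝ := if t = 0 then 0 else |t| ^ q

lemma frag_aux_layercake {Ω : Type*} [MeasurableSpace Ω] (μ : Measure Ω) (g : Ω → ℕ) :
    ∫⁻ ω, (g ω : ℝ≥0∞) ∂μ ≤ ∑' n : ℕ, μ {ω | n < g ω} := by
  have hpt : ∀ ω, (g ω : ℝ≥0∞) ≤
      ∑' n : ℕ, (toMeasurable μ {ω' | n < g ω'}).indicator (fun _ => (1:ℝ≥0∞)) ω := by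
    intro ω
    have h1 : (g ω : ℝ≥0∞) = ∑' n : ℕ, ({ω' | n < g ω'}).indicator (fun _ => (1:ℝ≥0∞)) ω := by
      calc (g ω : ℝ≥0∞) = ∑ _n ∈ Finset.range (g ω), 1 := by simp
        _ = ∑' n : ℕ, (if n < g ω then (1:ℝ≥0∞) else 0) := by
            have ht := tsum_eq_sum (L := SummationFilter.unconditional ℕ) (f := fun n : ℕ => if n < g ω then (1:ℝ≥0∞) else 0)
              (s := Finset.range (g ω))
              (fun n hn => if_neg (fun h => hn (Finset.mem_range.mpr h)))
            rw [ht]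
            exact Finset.sum_congr rfl fun n hn => (if_pos (Finset.mem_range.mp hn)).symm
        _ = _ := tsum_congr fun n => by simp [Set.indicator_apply]
    rw [h1]
    exact ENNReal.tsum_le_tsum fun n =>
      Set.indicator_le_indicator_of_subset (subset_toMeasurable μ _) (fun _ => zero_le) ω
  calc ∫⁻ ω, (g ω : ℝ≥0∞) ∂μ
      ≤ ∫⁻ ω, ∑' n : ℕ, (toMeasurable μ {ω' | n < g ω'}).indicator (fun _ => (1:ℝ≥0∞)) ω ∂μ :=
        lintegral_mono hpt
    _ = ∑' n : ℕ, ∫⁻ ω, (toMeasurable μ {ω' | n < g ω'}).indicator (fun _ => (1:ℝ≥0∞)) ω ∂μ :=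
        lintegral_tsum fun n => (Measurable.indicator measurable_const
          (measurableSet_toMeasurable μ _)).aemeasurable
    _ = ∑' n : ℕ, μ (toMeasurable μ {ω' | n < g ω'}) := by
        refine tsum_congr fun n => ?_
        have := lintegral_indicator_one (μ := μ) (measurableSet_toMeasurable μ {ω' | n < g ω'})
        simpa [Pi.one_def] using this
    _ = ∑' n : ℕ, μ {ω' | n < g ω'} := tsum_congr fun n => measure_toMeasurable _

lemma frag_aux_ncard_iUnion_le {α : Type*} : ∀ (m : ℕ) (t : Fin m → Set α),
    (⋃ i, t i).ncard ≤ ∑ i, (t i).ncard := by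
  intro m
  induction m with
  | zero => intro t; simp
  | succ m ih =>
    intro t
    have : (⋃ i, t i) = t 0 ∪ ⋃ i : Fin m, t i.succ := by
      ext a; simp [Fin.exists_fin_succ]
    rw [this, Fin.sum_univ_succ]
    exact (Set.ncard_union_le _ _).trans (by gcongr; exact ih _)

lemma frag_aux_count {b : ℕ} (hb : 2 ≤ b) : ∀ k : ℕ,
    ({l : List (Fin b) | l.length < k}).ncard + 1 ≤ b ^ k := by
  intro k
  induction k with
  | zero =>
    have h : {l : List (Fin b) | l.length < 0} = (∅ : Set (List (Fin b))) := by ext; simp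
    simp [h]
  | succ k ih =>
    have hdec : {l : List (Fin b) | l.length < k + 1} =
        insert [] (⋃ j : Fin b, (List.cons j) '' {l : List (Fin b) | l.length < k}) := by
      ext l
      cases l with
      | nil => simp
      | cons j t => simp [Nat.succ_lt_succ_iff, eq_comm]
    have hk : ({l : List (Fin b) | l.length < k}).Finite := List.finite_length_lt _ _
    have h1 : ({l : List (Fin b) | l.length < k + 1}).ncard ≤
        (⋃ j : Fin b, (List.cons j) '' {l : List (Fin b) | l.length < k}).ncard + 1 := by
      rw [hdec]; exact Set.ncard_insert_le _ _
    have h2 : (⋃ j : Fin b, (List.cons j) '' {l : List (Fin b) | l.length < k}).ncard ≤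
        b * ({l : List (Fin b) | l.length < k}).ncard := by
      refine (frag_aux_ncard_iUnion_le b _).trans ?_
      calc ∑ j : Fin b, ((List.cons j) '' {l : List (Fin b) | l.length < k}).ncard
          ≤ ∑ _j : Fin b, ({l : List (Fin b) | l.length < k}).ncard :=
            Finset.sum_le_sum fun j _ => Set.ncard_image_le hk
        _ = b * _ := by simp [Finset.sum_const, mul_comm]
    calc ({l : List (Fin b) | l.length < k + 1}).ncard + 1
        ≤ (b * ({l : List (Fin b) | l.length < k}).ncard + 1) + 1 := by omega
      _ ≤ b * ({l : List (Fin b) | l.length < k}).ncard + b := by omega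
      _ = b * (({l : List (Fin b) | l.length < k}).ncard + 1) := by ring
      _ ≤ b * b ^ k := Nat.mul_le_mul_left b ih
      _ = b ^ (k + 1) := by ring

lemma frag_aux_nodeWeight_ofFn {b : ℕ} (w : List (Fin b) → Fin b → ℝ) :
    ∀ (k : ℕ) (f : Fin k → Fin b),
      nodeWeight w (List.ofFn f) = ∏ i : Fin k, w ((List.ofFn f).drop (i + 1)) (f i) := by
  intro k
  induction k with
  | zero => intro f; simp [nodeWeight, List.ofFn_zero]
  | succ k ih =>
    intro f
    rw [List.ofFn_succ]
    show nodeWeight w (List.ofFn fun i => f i.succ) * w (List.ofFn fun i => f i.succ) (f 0) = _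
    rw [Fin.prod_univ_succ, ih]
    simp only [List.drop_succ_cons, List.drop_zero, Fin.val_succ, Fin.val_zero]
    exact mul_comm _ _

lemma frag_aux_exists_ofFn {α : Type*} : ∀ (L : List α) (k : ℕ), L.length = k →
    ∃ f : Fin k → α, List.ofFn f = L := by
  intro L k h
  subst h
  exact ⟨L.get, List.ofFn_get L⟩

lemma frag_aux_nodeWeight_mem {b : ℕ} (w : List (Fin b) → Fin b → ℝ)
    (hw : ∀ L j, 0 ≤ w L j ∧ w L j ≤ 1) :
    ∀ J : List (Fin b), 0 ≤ nodeWeight w J ∧ nodeWeight w J ≤ 1 := by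
  intro J
  induction J with
  | nil => simp [nodeWeight]
  | cons j J ih =>
    constructor
    · exact mul_nonneg ih.1 (hw J j).1
    · exact mul_le_one₀ ih.2 (hw J j).1 (hw J j).2

lemma frag_aux_nodeWeight_suffix {b : ℕ} (w : List (Fin b) → Fin b → ℝ)
    (hw : ∀ L j, 0 ≤ w L j ∧ w L j ≤ 1) (x : ℝ) (hx : 0 ≤ x) :
    ∀ (J K : List (Fin b)), 1 ≤ x * nodeWeight w (J ++ K) → 1 ≤ x * nodeWeight w K := by
  intro J
  induction J with
  | nil => intro K h; simpa using h
  | cons j J ih =>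
    intro K h
    refine ih K (le_trans h ?_)
    show x * (nodeWeight w (J ++ K) * w (J ++ K) j) ≤ _
    have h1 := (frag_aux_nodeWeight_mem w hw (J ++ K)).1
    have h2 := hw (J ++ K) j
    exact mul_le_mul_of_nonneg_left (mul_le_of_le_one_right h1 h2.2) hx

lemma frag_aux_nodeWeight_measurable {Ω : Type*} [MeasurableSpace Ω] {b : ℕ}
    (W : List (Fin b) → Fin b → Ω → ℝ) (hW : ∀ L j, Measurable (W L j)) (J : List (Fin b)) :
    Measurable fun ω => nodeWeight (fun L j => W L j ω) J := by
  induction J with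
  | nil => simpa [nodeWeight] using measurable_const
  | cons j J ih => exact ih.mul (hW J j)

lemma frag_aux_lintegral_indep {Ω : Type*} [MeasurableSpace Ω] (P : Measure Ω)
    [IsProbabilityMeasure P] {ι : Type*} {X : ι → Ω → ℝ≥0∞}
    (hX : iIndepFun X P) (hXm : ∀ i, Measurable (X i))
    (s : Finset ι) : ∫⁻ ω, ∏ i ∈ s, X i ω ∂P = ∏ i ∈ s, ∫⁻ ω, X i ω ∂P := by
  classical
  induction s using Finset.induction_on with
  | empty => simp
  | @insert a s ha ih =>
    simp only [Finset.prod_insert ha]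
    have hind : ProbabilityTheory.IndepFun (∏ i ∈ s, X i) (X a) P :=
      hX.indepFun_finsetProd_of_notMem hXm ha
    have hind' : ProbabilityTheory.IndepFun (fun ω => ∏ i ∈ s, X i ω) (X a) P := by
      have hfe : (∏ i ∈ s, X i) = fun ω => ∏ i ∈ s, X i ω := by
        funext ω; simp
      rwa [hfe] at hind
    have hm : Measurable fun ω => ∏ i ∈ s, X i ω :=
      Finset.measurable_prod s fun i _ => hXm i
    have h := ProbabilityTheory.lintegral_mul_eq_lintegral_mul_lintegral_of_indepFun
      (f := fun ω => ∏ i ∈ s, X i ω) (g := X a) hm (hXm a) hind'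
    calc ∫⁻ ω, X a ω * ∏ i ∈ s, X i ω ∂P
        = ∫⁻ ω, ((fun ω => ∏ i ∈ s, X i ω) * X a) ω ∂P := by
          refine lintegral_congr fun ω => ?_
          simp [mul_comm]
      _ = (∫⁻ ω, ∏ i ∈ s, X i ω ∂P) * ∫⁻ ω, X a ω ∂P := h
      _ = _ := by rw [ih, mul_comm]

noncomputable section

noncomputable section

lemma fragPw_measurable (q : ℝ) : Measurable (fragPw q) := by
  unfold fragPw
  refine Measurable.ite ?_ measurable_const ?_
  · exact measurableSet_eq
  · measurability

lemma fragPw_nonneg (q t : ℝ) : 0 ≤ fragPw q t := by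
  unfold fragPw
  split
  · exact le_refl 0
  · positivity

lemma fragPw_le_one {q t : ℝ} (hq : 0 ≤ q) (h0 : 0 ≤ t) (h1 : t ≤ 1) : fragPw q t ≤ 1 := by
  unfold fragPw
  split
  · norm_num
  · rw [_root_.abs_of_nonneg h0]; exact Real.rpow_le_one h0 h1 hq

variable {Ω : Type*} [MeasurableSpace Ω] (P : Measure Ω) [IsProbabilityMeasure P]
  {b : ℕ} (V : Fin b → Ω → ℝ)

lemma frag_integrable_pw (hVmeas : ∀ j, Measurable (V j)) (hV0 : ∀ j ω, 0 ≤ V j ω)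
    (hV1 : ∀ j ω, V j ω ≤ 1) (q : ℝ) (hq : 0 ≤ q) (j : Fin b) :
    Integrable (fun ω => fragPw q (V j ω)) P := by
  refine Integrable.mono' (integrable_const 1)
    (((fragPw_measurable q).comp (hVmeas j)).aestronglyMeasurable) ?_
  refine Filter.Eventually.of_forall fun ω => ?_
  rw [Real.norm_eq_abs, _root_.abs_of_nonneg (fragPw_nonneg q _)]
  exact fragPw_le_one hq (hV0 j ω) (hV1 j ω)

lemma frag_phiR_eq (hV0 : ∀ j ω, 0 ≤ V j ω) (q : ℝ) :
    phiR P V q = ∑ j, ∫ ω, fragPw q (V j ω) ∂P := by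
  unfold phiR
  refine Finset.sum_congr rfl fun j _ => ?_
  refine integral_congr_ae (Filter.Eventually.of_forall fun ω => ?_)
  simp only [fragPw]
  rcases eq_or_ne (V j ω) 0 with h | h
  · simp [h]
  · simp [h, _root_.abs_of_nonneg (hV0 j ω)]

lemma frag_phiR_nonneg (hV0 : ∀ j ω, 0 ≤ V j ω) (q : ℝ) : 0 ≤ phiR P V q := by
  rw [frag_phiR_eq P V hV0 q]
  exact Finset.sum_nonneg fun j _ =>
    integral_nonneg fun ω => fragPw_nonneg q _

lemma frag_phiR_pos (hb : 2 ≤ b) (hVmeas : ∀ j, Measurable (V j)) (hV0 : ∀ j ω, 0 ≤ V j ω)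
    (hV1 : ∀ j ω, V j ω ≤ 1) (hVsum : ∀ ω, ∑ j, V j ω = 1) (q : ℝ) (hq : 0 ≤ q) :
    0 < phiR P V q := by
  have hbpos : (0:ℝ) < (b:ℝ) := by positivity
  have hkey : ∀ ω, ((b:ℝ))⁻¹ ^ q ≤ ∑ j, fragPw q (V j ω) := by
    intro ω
    have hex : ∃ j : Fin b, (b:ℝ)⁻¹ ≤ V j ω := by
      by_contra hc
      push_neg at hc
      have hne : (Finset.univ : Finset (Fin b)).Nonempty := by
        refine Finset.univ_nonempty_iff.mpr ?_
        exact Fin.pos_iff_nonempty.mp (by omega)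
      have := Finset.sum_lt_sum_of_nonempty hne (fun j _ => hc j)
      rw [hVsum ω] at this
      simp only [Finset.sum_const, Finset.card_univ, Fintype.card_fin, nsmul_eq_mul] at this
      rw [mul_inv_cancel₀ (ne_of_gt hbpos)] at this
      exact lt_irrefl 1 this
    obtain ⟨j, hj⟩ := hex
    have hjpos : 0 < V j ω := lt_of_lt_of_le (by positivity) hj
    have h1 : ((b:ℝ))⁻¹ ^ q ≤ fragPw q (V j ω) := by
      unfold fragPw
      rw [if_neg (ne_of_gt hjpos), _root_.abs_of_pos hjpos]
      exact Real.rpow_le_rpow (by positivity) hj hq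
    refine le_trans h1 ?_
    exact Finset.single_le_sum (f := fun i => fragPw q (V i ω))
      (fun i _ => fragPw_nonneg q _) (Finset.mem_univ j)
  rw [frag_phiR_eq P V hV0 q]
  have hint : ∀ j : Fin b, Integrable (fun ω => fragPw q (V j ω)) P :=
    frag_integrable_pw P V hVmeas hV0 hV1 q hq
  rw [← integral_finset_sum Finset.univ (fun j _ => hint j)]
  have h2 : ((b:ℝ))⁻¹ ^ q ≤ ∫ ω, ∑ j, fragPw q (V j ω) ∂P := by
    have := integral_mono (μ := P) (integrable_const (((b:ℝ))⁻¹ ^ q))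
      (integrable_finset_sum Finset.univ (fun j _ => hint j)) hkey
    simpa using this
  refine lt_of_lt_of_le ?_ h2
  positivity

lemma frag_phiR_tendsto (hVmeas : ∀ j, Measurable (V j)) (hV0 : ∀ j ω, 0 ≤ V j ω)
    (hV1 : ∀ j ω, V j ω ≤ 1) (hVlt1 : ∀ j, ∀ᵐ ω ∂P, V j ω < 1) :
    Tendsto (fun n : ℕ => phiR P V n) atTop (nhds 0) := by
  have h : ∀ j : Fin b, Tendsto (fun n : ℕ => ∫ ω, fragPw n (V j ω) ∂P) atTop (nhds 0) := by
    intro j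
    have hT := tendsto_integral_of_dominated_convergence
      (F := fun (n : ℕ) (ω : Ω) => fragPw (n:ℝ) (V j ω)) (f := fun _ : Ω => (0:ℝ))
      (μ := P) (bound := fun _ => 1)
      (fun n => ((fragPw_measurable _).comp (hVmeas j)).aestronglyMeasurable)
      (integrable_const (μ := P) 1) ?_ ?_
    · simpa using hT
    · refine fun n => Filter.Eventually.of_forall fun ω => ?_
      rw [Real.norm_eq_abs, _root_.abs_of_nonneg (fragPw_nonneg _ _)]
      exact fragPw_le_one (by positivity) (hV0 j ω) (hV1 j ω)
    · filter_upwards [hVlt1 j] with ω hω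
      rcases eq_or_ne (V j ω) 0 with h0 | h0
      · simp only [fragPw, h0, if_pos rfl]
        exact tendsto_const_nhds
      · simp only [fragPw, if_neg h0, _root_.abs_of_nonneg (hV0 j ω)]
        have heq : ∀ n : ℕ, V j ω ^ (n : ℝ) = V j ω ^ n := fun n => Real.rpow_natCast _ n
        simp only [heq]
        exact tendsto_pow_atTop_nhds_zero_of_lt_one (hV0 j ω) hω
  have t1 := tendsto_finset_sum (Finset.univ : Finset (Fin b)) (fun j _ => h j)
  rw [Finset.sum_const, smul_zero] at t1
  have heq : ∀ n : ℕ, phiR P V n = ∑ j, ∫ ω, fragPw n (V j ω) ∂P := fun n =>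
    frag_phiR_eq P V hV0 _
  exact Tendsto.congr (fun n => (heq n).symm) t1

lemma frag_sum_lintegral_pw (hVmeas : ∀ j, Measurable (V j)) (hV0 : ∀ j ω, 0 ≤ V j ω)
    (hV1 : ∀ j ω, V j ω ≤ 1) (q : ℝ) (hq : 0 ≤ q) :
    ∑ j, ∫⁻ ω, ENNReal.ofReal (fragPw q (V j ω)) ∂P = ENNReal.ofReal (phiR P V q) := by
  rw [frag_phiR_eq P V hV0 q, ENNReal.ofReal_sum_of_nonneg
    (fun j _ => integral_nonneg fun ω => fragPw_nonneg q _)]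
  refine Finset.sum_congr rfl fun j _ => ?_
  rw [ofReal_integral_eq_lintegral_ofReal (frag_integrable_pw P V hVmeas hV0 hV1 q hq j)
    (Filter.Eventually.of_forall fun ω => fragPw_nonneg q _)]

lemma frag_tail_bound {Ω : Type*} [MeasurableSpace Ω] (P : Measure Ω) [IsProbabilityMeasure P]
    {b : ℕ} (hb : 2 ≤ b) (V : Fin b → Ω → ℝ)
    (hVmeas : ∀ j, Measurable (V j)) (hV0 : ∀ j ω, 0 ≤ V j ω) (hV1 : ∀ j ω, V j ω ≤ 1)
    (hVsum : ∀ ω, ∑ j, V j ω = 1)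
    (W : List (Fin b) → Fin b → Ω → ℝ) (hWmeas : ∀ J j, Measurable (W J j))
    (hWdist : ∀ J, Measure.map (fun ω j => W J j ω) P = Measure.map (fun ω j => V j ω) P)
    (hWindep : iIndepFun (fun J ω j => W J j ω) P)
    (q : ℝ) (hq : 1 ≤ q) (hφ1 : phiR P V q ≤ 1) (x : ℝ) (hx : 0 ≤ x)
    (y : ℝ) (hy : (b : ℝ) ≤ y) :
    P {ω | y < (fragN W x ω : ℝ)} ≤
      ENNReal.ofReal (x ^ q / (phiR P V q) ^ 2 * y ^ Real.logb b (phiR P V q)) := by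
  classical
  have hq0 : (0:ℝ) ≤ q := le_trans zero_le_one hq
  have hb1 : (1:ℝ) < (b:ℝ) := by exact_mod_cast hb.trans_lt' one_lt_two
  have hbpos : (0:ℝ) < (b:ℝ) := lt_trans one_pos hb1
  have hy1 : (1:ℝ) ≤ y := le_trans hb1.le hy
  have hypos : (0:ℝ) < y := lt_of_lt_of_le one_pos hy1
  have hφpos : 0 < phiR P V q := frag_phiR_pos P V hb hVmeas hV0 hV1 hVsum q hq0
  set φ := phiR P V q with hφdef
  set k := ⌊Real.logb b y⌋₊ with hkdef
  have hlogb_nonneg : 0 ≤ Real.logb b y := Real.logb_nonneg hb1 hy1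
  have hbk_le_y : ((b:ℝ)) ^ k ≤ y := by
    have h1 : ((b:ℝ)) ^ ((k:ℕ):ℝ) ≤ (b:ℝ) ^ (Real.logb b y) :=
      Real.rpow_le_rpow_of_exponent_le hb1.le (Nat.floor_le hlogb_nonneg)
    rw [Real.rpow_natCast, Real.rpow_logb hbpos (ne_of_gt hb1) hypos] at h1
    exact h1
  -- the good set
  set G : Set Ω := ⋂ (L : List (Fin b)), ⋂ (j : Fin b), (W L j) ⁻¹' (Set.Icc 0 1) with hGdef
  have hGmeas : MeasurableSet G :=
    MeasurableSet.iInter fun L => MeasurableSet.iInter fun j => (hWmeas L j) measurableSet_Icc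
  have hGω : ∀ ω ∈ G, ∀ L j, 0 ≤ W L j ω ∧ W L j ω ≤ 1 := by
    intro ω hω L j
    have := Set.mem_iInter.mp (Set.mem_iInter.mp hω L) j
    simpa [Set.mem_Icc] using this
  have hGc : P Gᶜ = 0 := by
    have hLj : ∀ L j, P (((W L j) ⁻¹' (Set.Icc (0:ℝ) 1))ᶜ) = 0 := by
      intro L j
      have hXm : Measurable (fun ω (j' : Fin b) => W L j' ω) :=
        measurable_pi_lambda _ (hWmeas L)
      have hVm : Measurable (fun ω (j' : Fin b) => V j' ω) :=
        measurable_pi_lambda _ hVmeas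
      have hset : MeasurableSet {v : Fin b → ℝ | v j ∈ (Set.Icc (0:ℝ) 1)ᶜ} :=
        (measurable_pi_apply j) measurableSet_Icc.compl
      have h1 : ((W L j) ⁻¹' (Set.Icc (0:ℝ) 1))ᶜ =
          (fun ω (j' : Fin b) => W L j' ω) ⁻¹' {v | v j ∈ (Set.Icc (0:ℝ) 1)ᶜ} := by
        ext ω; simp
      rw [h1, ← Measure.map_apply hXm hset, hWdist L, Measure.map_apply hVm hset]
      have h2 : (fun ω (j' : Fin b) => V j' ω) ⁻¹' {v | v j ∈ (Set.Icc (0:ℝ) 1)ᶜ} = ∅ := by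
        ext ω; simp [Set.mem_Icc, hV0 j ω, hV1 j ω]
      rw [h2, measure_empty]
    have hcompl : Gᶜ = ⋃ (L : List (Fin b)), ⋃ (j : Fin b), ((W L j) ⁻¹' (Set.Icc (0:ℝ) 1))ᶜ := by
      rw [hGdef]
      simp [Set.compl_iInter]
    rw [hcompl]
    exact measure_iUnion_null fun L => measure_iUnion_null fun j => hLj L j
  set A := {ω | y < (fragN W x ω : ℝ)} with hAdef
  -- the covering
  have hcover : A ∩ G ⊆ ⋃ f : (Fin k → Fin b),
      (G ∩ {ω | 1 ≤ x * nodeWeight (fun L j => W L j ω) (List.ofFn f)}) := by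
    rintro ω ⟨hA, hG⟩
    set w := fun L j => W L j ω with hwdef
    have hw : ∀ L j, 0 ≤ w L j ∧ w L j ≤ 1 := fun L j => hGω ω hG L j
    have hS : y < ((Set.ncard {J : List (Fin b) | 1 ≤ x * nodeWeight w J} : ℕ) : ℝ) := hA
    have hex : ∃ J : List (Fin b), k ≤ J.length ∧ 1 ≤ x * nodeWeight w J := by
      by_contra hc
      push_neg at hc
      have hsub : {J : List (Fin b) | 1 ≤ x * nodeWeight w J} ⊆ {l | l.length < k} := by
        intro J hJ
        by_contra hlen
        have := hc J (le_of_not_gt (by simpa using hlen))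
        exact absurd hJ (not_le.mpr this)
      have hfin := List.finite_length_lt (Fin b) k
      have h1 : Set.ncard {J : List (Fin b) | 1 ≤ x * nodeWeight w J} ≤
          Set.ncard {l : List (Fin b) | l.length < k} := Set.ncard_le_ncard hsub hfin
      have h2 := frag_aux_count hb k
      have h3 : Set.ncard {J : List (Fin b) | 1 ≤ x * nodeWeight w J} < b ^ k := by omega
      have h4 : ((Set.ncard {J : List (Fin b) | 1 ≤ x * nodeWeight w J} : ℕ) : ℝ) <
          ((b:ℝ)) ^ k := by exact_mod_cast h3
      linarith
    obtain ⟨J, hJk, hJlive⟩ := hex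
    set L := J.drop (J.length - k) with hLdef
    have hLlen : L.length = k := by
      rw [hLdef, List.length_drop]
      omega
    have hLlive : 1 ≤ x * nodeWeight w L := by
      refine frag_aux_nodeWeight_suffix w hw x hx (J.take (J.length - k)) L ?_
      rw [hLdef, List.take_append_drop]
      exact hJlive
    obtain ⟨f, hf⟩ := frag_aux_exists_ofFn L k hLlen
    exact Set.mem_iUnion.mpr ⟨f, hG, by rw [hf]; exact hLlive⟩
  -- digit assignment and per-node estimate
  have hj0 : 0 < b := by omega
  set dig : (Fin k → Fin b) → List (Fin b) → Fin b := fun f L =>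
    if h : k - L.length - 1 < k then f ⟨k - L.length - 1, h⟩ else ⟨0, hj0⟩ with hdigdef
  set εE : Fin b → ℝ≥0∞ := fun j => ∫⁻ ω, ENNReal.ofReal (fragPw q (V j ω)) ∂P with hεdef
  have hnode : ∀ f : Fin k → Fin b,
      P (G ∩ {ω | 1 ≤ x * nodeWeight (fun L j => W L j ω) (List.ofFn f)}) ≤
        ENNReal.ofReal (x ^ q) * ∏ i : Fin k, εE (f i) := by
    intro f
    set J := List.ofFn f with hJdef
    have hJlen : J.length = k := List.length_ofFn (f := f)
    have hdig : ∀ i : Fin k, dig f (J.drop ((i:ℕ)+1)) = f i := by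
      intro i
      have hlen : (J.drop ((i:ℕ)+1)).length = k - ((i:ℕ)+1) := by
        rw [List.length_drop, hJlen]
      have h2 : k - (J.length - ((i:ℕ) + 1)) - 1 = (i:ℕ) := by
        rw [hJlen]; have := i.isLt; omega
      simp only [hdigdef, List.length_drop, h2]
      rw [dif_pos i.isLt]
    set Y : List (Fin b) → Ω → ℝ≥0∞ :=
      fun L ω => ENNReal.ofReal (fragPw q (W L (dig f L) ω)) with hYdef
    have hYm : ∀ L, Measurable (Y L) := fun L =>
      ENNReal.measurable_ofReal.comp ((fragPw_measurable q).comp (hWmeas L (dig f L)))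
    have hYindep : iIndepFun Y P := by
      have := hWindep.comp (fun L (v : Fin b → ℝ) => ENNReal.ofReal (fragPw q (v (dig f L))))
        (fun L => ENNReal.measurable_ofReal.comp
          ((fragPw_measurable q).comp (measurable_pi_apply _)))
      exact this
    set Ef := G ∩ {ω | 1 ≤ x * nodeWeight (fun L j => W L j ω) J} with hEfdef
    have hEfmeas : MeasurableSet Ef := hGmeas.inter (measurableSet_le measurable_const
        (measurable_const.mul (frag_aux_nodeWeight_measurable W hWmeas J)))
    have hind : ∀ ω, Set.indicator Ef (fun _ => (1:ℝ≥0∞)) ω ≤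
        ENNReal.ofReal (x ^ q) * ∏ i : Fin k, Y (J.drop ((i:ℕ)+1)) ω := by
      intro ω
      by_cases hω : ω ∈ Ef
      · rw [Set.indicator_of_mem hω]
        obtain ⟨hG, hlive⟩ := hω
        set w := fun L j => W L j ω with hwdef
        have hw : ∀ L j, 0 ≤ w L j ∧ w L j ≤ 1 := fun L j => hGω ω hG L j
        have hlive' : (1:ℝ) ≤ x * nodeWeight w J := hlive
        have hnwpos : 0 < nodeWeight w J := by nlinarith [(frag_aux_nodeWeight_mem w hw J).1]
        have hxpos : 0 < x := by nlinarith [(frag_aux_nodeWeight_mem w hw J).2]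
        have hprod : nodeWeight w J = ∏ i : Fin k, w (J.drop ((i:ℕ)+1)) (f i) :=
          frag_aux_nodeWeight_ofFn w k f
        have hfac_pos : ∀ i : Fin k, 0 < w (J.drop ((i:ℕ)+1)) (f i) := by
          intro i
          rcases (hw _ _).1.lt_or_eq with h | h
          · exact h
          · exfalso
            rw [hprod, Finset.prod_eq_zero (Finset.mem_univ i) h.symm] at hnwpos
            exact lt_irrefl 0 hnwpos
        have h1q : (1:ℝ) ≤ (x * nodeWeight w J) ^ q := Real.one_le_rpow hlive' hq0
        have hsplit : (x * nodeWeight w J) ^ q =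
            x ^ q * ∏ i : Fin k, (w (J.drop ((i:ℕ)+1)) (f i)) ^ q := by
          rw [Real.mul_rpow hx hnwpos.le, hprod,
            Real.finset_prod_rpow _ _ (fun i _ => (hw _ _).1) q]
        have hfinal : (1:ℝ) ≤ x ^ q * ∏ i : Fin k, fragPw q (w (J.drop ((i:ℕ)+1)) (f i)) := by
          rw [hsplit] at h1q
          have hc : ∏ i : Fin k, (w (J.drop ((i:ℕ)+1)) (f i)) ^ q =
              ∏ i : Fin k, fragPw q (w (J.drop ((i:ℕ)+1)) (f i)) := by
            refine Finset.prod_congr rfl fun i _ => ?_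
            unfold fragPw
            rw [if_neg (ne_of_gt (hfac_pos i)), _root_.abs_of_pos (hfac_pos i)]
          rw [← hc]
          exact h1q
        calc (1:ℝ≥0∞) = ENNReal.ofReal 1 := ENNReal.ofReal_one.symm
          _ ≤ ENNReal.ofReal (x ^ q * ∏ i : Fin k, fragPw q (w (J.drop ((i:ℕ)+1)) (f i))) :=
              ENNReal.ofReal_le_ofReal hfinal
          _ = ENNReal.ofReal (x ^ q) *
              ∏ i : Fin k, ENNReal.ofReal (fragPw q (w (J.drop ((i:ℕ)+1)) (f i))) := by
              rw [ENNReal.ofReal_mul (Real.rpow_nonneg hx q),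
                ENNReal.ofReal_prod_of_nonneg (fun i _ => fragPw_nonneg q _)]
          _ = ENNReal.ofReal (x ^ q) * ∏ i : Fin k, Y (J.drop ((i:ℕ)+1)) ω := by
              refine congrArg _ (Finset.prod_congr rfl fun i _ => ?_)
              simp only [hYdef, hwdef, hdig i]
      · rw [Set.indicator_of_notMem hω]
        exact zero_le
    have hinj : ∀ i ∈ (Finset.univ : Finset (Fin k)), ∀ i' ∈ (Finset.univ : Finset (Fin k)),
        J.drop ((i:ℕ)+1) = J.drop ((i':ℕ)+1) → i = i' := by
      intro i _ i' _ h
      have hlg := congrArg List.length h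
      rw [List.length_drop, List.length_drop, hJlen] at hlg
      have hi := i.isLt; have hi' := i'.isLt
      exact Fin.ext (by omega)
    have hPEf : P Ef = ∫⁻ ω, Set.indicator Ef (fun _ => (1:ℝ≥0∞)) ω ∂P := by
      have := lintegral_indicator_one (μ := P) hEfmeas
      simp only [Pi.one_def] at this
      exact this.symm
    calc P Ef = ∫⁻ ω, Set.indicator Ef (fun _ => (1:ℝ≥0∞)) ω ∂P := hPEf
      _ ≤ ∫⁻ ω, ENNReal.ofReal (x ^ q) * ∏ i : Fin k, Y (J.drop ((i:ℕ)+1)) ω ∂P :=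
          lintegral_mono hind
      _ = ENNReal.ofReal (x ^ q) * ∫⁻ ω, ∏ i : Fin k, Y (J.drop ((i:ℕ)+1)) ω ∂P :=
          lintegral_const_mul _ (Finset.measurable_prod _ fun i _ => (hYm _))
      _ = ENNReal.ofReal (x ^ q) * ∏ i : Fin k, εE (f i) := by
          congr 1
          have h1 : ∀ ω, ∏ i : Fin k, Y (J.drop ((i:ℕ)+1)) ω =
              ∏ L ∈ Finset.image (fun i : Fin k => J.drop ((i:ℕ)+1)) Finset.univ, Y L ω :=
            fun ω => (Finset.prod_image (f := fun L => Y L ω)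
              (fun i hi i' hi' h => hinj i hi i' hi' h)).symm
          rw [lintegral_congr h1, frag_aux_lintegral_indep P hYindep hYm _,
            Finset.prod_image hinj]
          refine Finset.prod_congr rfl fun i _ => ?_
          have hXm : Measurable (fun ω (j' : Fin b) => W (J.drop ((i:ℕ)+1)) j' ω) :=
            measurable_pi_lambda _ (hWmeas _)
          have hVm : Measurable (fun ω (j' : Fin b) => V j' ω) :=
            measurable_pi_lambda _ hVmeas
          have hgm : Measurable (fun v : Fin b → ℝ =>
              ENNReal.ofReal (fragPw q (v (dig f (J.drop ((i:ℕ)+1)))))) :=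
            ENNReal.measurable_ofReal.comp ((fragPw_measurable q).comp (measurable_pi_apply _))
          calc ∫⁻ ω, Y (J.drop ((i:ℕ)+1)) ω ∂P
              = ∫⁻ v, ENNReal.ofReal (fragPw q (v (dig f (J.drop ((i:ℕ)+1)))))
                  ∂(Measure.map (fun ω (j' : Fin b) => W (J.drop ((i:ℕ)+1)) j' ω) P) :=
                (lintegral_map hgm hXm).symm
            _ = ∫⁻ v, ENNReal.ofReal (fragPw q (v (dig f (J.drop ((i:ℕ)+1)))))
                  ∂(Measure.map (fun ω (j' : Fin b) => V j' ω) P) := by rw [hWdist]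
            _ = ∫⁻ ω, ENNReal.ofReal (fragPw q (V (dig f (J.drop ((i:ℕ)+1))) ω)) ∂P :=
                lintegral_map hgm hVm
            _ = εE (f i) := by rw [hdig i]
  -- sum over all level-k nodes
  have hsum : P A ≤ ENNReal.ofReal (x ^ q) * ENNReal.ofReal φ ^ k := by
    have hPA : P A ≤ P (A ∩ G) := by
      have hsplit : A ⊆ (A ∩ G) ∪ Gᶜ := by
        intro ω hω
        by_cases h : ω ∈ G
        · exact Or.inl ⟨hω, h⟩
        · exact Or.inr h
      calc P A ≤ P ((A ∩ G) ∪ Gᶜ) := measure_mono hsplit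
        _ ≤ P (A ∩ G) + P Gᶜ := measure_union_le _ _
        _ = P (A ∩ G) := by rw [hGc, add_zero]
    have hPcover : P (A ∩ G) ≤ ∑ f : Fin k → Fin b,
        P (G ∩ {ω | 1 ≤ x * nodeWeight (fun L j => W L j ω) (List.ofFn f)}) := by
      refine le_trans (measure_mono hcover) (le_trans (measure_iUnion_le _) ?_)
      rw [tsum_fintype]
    have h3 : ∑ f : Fin k → Fin b, (ENNReal.ofReal (x ^ q) * ∏ i : Fin k, εE (f i))
        = ENNReal.ofReal (x ^ q) * (∑ j, εE j) ^ k := by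
      rw [← Finset.mul_sum]
      congr 1
      have hps := Finset.prod_univ_sum (fun _ : Fin k => (Finset.univ : Finset (Fin b)))
        (fun _ j => εE j)
      rw [Fintype.piFinset_univ] at hps
      rw [← hps, Finset.prod_const, Finset.card_univ, Fintype.card_fin]
    have h4 : (∑ j, εE j) = ENNReal.ofReal φ := by
      rw [hεdef]
      exact frag_sum_lintegral_pw P V hVmeas hV0 hV1 q hq0
    calc P A ≤ P (A ∩ G) := hPA
      _ ≤ ∑ f : Fin k → Fin b,
          P (G ∩ {ω | 1 ≤ x * nodeWeight (fun L j => W L j ω) (List.ofFn f)}) := hPcover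
      _ ≤ ∑ f : Fin k → Fin b, (ENNReal.ofReal (x ^ q) * ∏ i : Fin k, εE (f i)) :=
          Finset.sum_le_sum fun f _ => hnode f
      _ = ENNReal.ofReal (x ^ q) * (∑ j, εE j) ^ k := h3
      _ = _ := by rw [h4]
  -- final numeric comparison
  refine le_trans hsum ?_
  have hofr : ENNReal.ofReal (x ^ q) * ENNReal.ofReal φ ^ k = ENNReal.ofReal (x ^ q * φ ^ k) := by
    rw [← ENNReal.ofReal_pow hφpos.le, ← ENNReal.ofReal_mul (Real.rpow_nonneg hx q)]
  rw [hofr]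
  refine ENNReal.ofReal_le_ofReal ?_
  have hlogφ : Real.log φ ≤ 0 := Real.log_nonpos hφpos.le hφ1
  have hky : Real.logb b y - 2 ≤ (k:ℝ) := by
    have hfl := Nat.lt_floor_add_one (Real.logb b y)
    rw [hkdef]
    push_cast
    push_cast at hfl
    linarith
  have hmul : (k:ℝ) * Real.log φ ≤ (Real.logb b y - 2) * Real.log φ :=
    mul_le_mul_of_nonpos_right hky hlogφ
  have hexp : φ ^ k ≤ y ^ Real.logb b φ / φ ^ 2 := by
    have e1 : φ ^ k = Real.exp ((k:ℝ) * Real.log φ) := by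
      rw [Real.exp_nat_mul, Real.exp_log hφpos]
    have e2 : y ^ Real.logb b φ = Real.exp (Real.logb b φ * Real.log y) := by
      rw [Real.rpow_def_of_pos hypos, mul_comm]
    have e3 : (φ:ℝ) ^ (2:ℕ) = Real.exp ((2:ℝ) * Real.log φ) := by
      rw [show ((2:ℝ)) = ((2:ℕ):ℝ) by norm_num, Real.exp_nat_mul, Real.exp_log hφpos]
    rw [e1, e2, e3, ← Real.exp_sub]
    refine Real.exp_le_exp.mpr ?_
    have heq : Real.logb b φ * Real.log y - 2 * Real.log φ =
        (Real.logb b y - 2) * Real.log φ := by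
      simp only [Real.logb]
      ring
    rw [heq]
    exact hmul
  calc x ^ q * φ ^ k ≤ x ^ q * (y ^ Real.logb b φ / φ ^ 2) :=
      mul_le_mul_of_nonneg_left hexp (Real.rpow_nonneg hx q)
    _ = x ^ q / φ ^ 2 * y ^ Real.logb b φ := by ring


end

end

end FragAuxiliary

/-- Lemma 3.4.  All moments of N(x) are finite, uniformly for
bounded x, and there is an explicit polynomial tail bound. -/
theorem frag_moments_finite
    {Ω : Type*} [MeasurableSpace Ω] (P : Measure Ω) [IsProbabilityMeasure P]
    {b : ℕ} (hb : 2 ≤ b)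
    (V : Fin b → Ω → ℝ)
    (hVmeas : ∀ j, Measurable (V j))
    (hV0 : ∀ j ω, 0 ≤ V j ω) (hV1 : ∀ j ω, V j ω ≤ 1)
    (hVsum : ∀ ω, ∑ j, V j ω = 1)
    (hVlt1 : ∀ j, ∀ᵐ ω ∂P, V j ω < 1)
    (W : List (Fin b) → Fin b → Ω → ℝ)
    (hWmeas : ∀ J j, Measurable (W J j))
    (hWdist : ∀ J, Measure.map (fun ω j => W J j ω) P = Measure.map (fun ω j => V j ω) P)
    (hWindep : iIndepFun (fun J ω j => W J j ω) P)
    : (∀ m : ℕ, 1 ≤ m → ∀ x : ℝ, 0 ≤ x →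
        (∫⁻ ω, (fragN W x ω : ℝ≥0∞) ^ m ∂P) < ⊤ ∧
        (⨆ y ∈ Set.Icc (0:ℝ) x, ∫⁻ ω, (fragN W y ω : ℝ≥0∞) ^ m ∂P) < ⊤) ∧
      (∀ q : ℝ, 1 ≤ q → phiR P V q ≤ 1 → ∀ x : ℝ, 0 ≤ x → ∀ y : ℝ, (b : ℝ) ≤ y →
        P {ω | y < (fragN W x ω : ℝ)} ≤
          ENNReal.ofReal (x ^ q / (phiR P V q) ^ 2 * y ^ Real.logb b (phiR P V q))) := by
  refine ⟨fun m hm x hx => ?_, fun q hq hφ1 x hx y hy =>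
    frag_tail_bound P hb V hVmeas hV0 hV1 hVsum W hWmeas hWdist hWindep q hq hφ1 x hx y hy⟩
  have hb1 : (1:ℝ) < (b:ℝ) := by exact_mod_cast hb.trans_lt' one_lt_two
  have hbpos : (0:ℝ) < (b:ℝ) := lt_trans one_pos hb1
  have hm0 : (0:ℝ) < (m:ℝ) := by exact_mod_cast hm
  have hmne : ((m:ℝ)) ≠ 0 := ne_of_gt hm0
  -- choose a large exponent q
  have hεpos : (0:ℝ) < (b:ℝ) ^ (-((m:ℝ)+2)) := Real.rpow_pos_of_pos hbpos _
  obtain ⟨n, hnφ, hn1⟩ : ∃ n : ℕ, phiR P V n < (b:ℝ) ^ (-((m:ℝ)+2)) ∧ 1 ≤ n := by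
    have htend := frag_phiR_tendsto P V hVmeas hV0 hV1 hVlt1
    exact ((htend.eventually (gt_mem_nhds hεpos)).and (Filter.eventually_ge_atTop 1)).exists
  set q := ((n:ℕ):ℝ) with hqdef
  have hq1 : (1:ℝ) ≤ q := by rw [hqdef]; exact_mod_cast hn1
  have hq0 : (0:ℝ) ≤ q := le_trans zero_le_one hq1
  have hφpos : 0 < phiR P V q := frag_phiR_pos P V hb hVmeas hV0 hV1 hVsum q hq0
  set φ := phiR P V q with hφdef
  have hφε : φ ≤ (b:ℝ) ^ (-((m:ℝ)+2)) := le_of_lt hnφ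
  have hφ1 : φ ≤ 1 := le_trans hφε (Real.rpow_le_one_of_one_le_of_nonpos hb1.le (by linarith))
  have hβ : Real.logb b φ ≤ -((m:ℝ)+2) := by
    have h1 := (Real.logb_le_logb hb1 hφpos hεpos).mpr hφε
    rwa [Real.logb_rpow hbpos (ne_of_gt hb1)] at h1
  set e := (m:ℝ)⁻¹ * Real.logb b φ with hedef
  have hminv : (0:ℝ) < (m:ℝ)⁻¹ := by positivity
  have he : e < -1 := by
    have he1 : e ≤ (m:ℝ)⁻¹ * (-((m:ℝ)+2)) := mul_le_mul_of_nonneg_left hβ hminv.le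
    have hmm : (m:ℝ)⁻¹ * (m:ℝ) = 1 := inv_mul_cancel₀ hmne
    nlinarith
  set c := x ^ q / φ ^ 2 with hcdef
  have hc0 : 0 ≤ c := by
    rw [hcdef]
    positivity
  have hsummable : Summable (fun n : ℕ => c * (n:ℝ) ^ e) :=
    (Real.summable_nat_rpow.2 he).mul_left c
  set D : ℝ≥0∞ := ((b ^ m : ℕ) : ℝ≥0∞) +
    ENNReal.ofReal (∑' n : ℕ, c * (n:ℝ) ^ e) with hDdef
  have hD : D < ⊤ := by
    rw [hDdef]
    exact ENNReal.add_lt_top.mpr ⟨ENNReal.natCast_lt_top _, ENNReal.ofReal_lt_top⟩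
  have hbound : ∀ x' ∈ Set.Icc (0:ℝ) x, (∫⁻ ω, (fragN W x' ω : ℝ≥0∞) ^ m ∂P) ≤ D := by
    rintro x' ⟨hx'0, hx'x⟩
    have h0 := frag_aux_layercake P (fun ω => fragN W x' ω ^ m)
    have hcast : ∀ ω, (((fun ω => fragN W x' ω ^ m) ω : ℕ) : ℝ≥0∞) =
        (fragN W x' ω : ℝ≥0∞) ^ m := by
      intro ω
      push_cast
      ring
    rw [lintegral_congr hcast] at h0
    refine le_trans h0 ?_
    have hterm : ∀ nn : ℕ, P {ω | nn < fragN W x' ω ^ m} ≤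
        (if nn < b ^ m then (1:ℝ≥0∞) else 0) + ENNReal.ofReal (c * (nn:ℝ) ^ e) := by
      intro nn
      by_cases hn : nn < b ^ m
      · rw [if_pos hn]
        exact le_trans prob_le_one le_self_add
      · rw [if_neg hn, zero_add]
        have hnb : ((b:ℝ)) ^ (m:ℕ) ≤ (nn:ℝ) := by
          have := le_of_not_gt hn
          exact_mod_cast this
        have hnn0 : (0:ℝ) ≤ (nn:ℝ) := Nat.cast_nonneg nn
        set yn := (nn:ℝ) ^ ((m:ℝ)⁻¹) with hyn
        have hyb : (b:ℝ) ≤ yn := by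
          have h1 : (((b:ℝ)) ^ (m:ℕ)) ^ ((m:ℝ)⁻¹) ≤ yn :=
            Real.rpow_le_rpow (by positivity) hnb hminv.le
          rwa [← Real.rpow_natCast (b:ℝ) m, ← Real.rpow_mul hbpos.le,
            mul_inv_cancel₀ hmne, Real.rpow_one] at h1
        have hsub : {ω | nn < fragN W x' ω ^ m} ⊆ {ω | yn < (fragN W x' ω : ℝ)} := by
          intro ω hω
          have h1 : (nn:ℝ) < ((fragN W x' ω : ℝ)) ^ (m:ℕ) := by exact_mod_cast hω
          have h2 : yn < (((fragN W x' ω : ℝ)) ^ (m:ℕ)) ^ ((m:ℝ)⁻¹) :=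
            Real.rpow_lt_rpow hnn0 h1 hminv
          rwa [← Real.rpow_natCast ((fragN W x' ω : ℝ)) m,
            ← Real.rpow_mul (Nat.cast_nonneg _), mul_inv_cancel₀ hmne, Real.rpow_one] at h2
        refine le_trans (measure_mono hsub) ?_
        refine le_trans (frag_tail_bound P hb V hVmeas hV0 hV1 hVsum W hWmeas hWdist hWindep
          q hq1 hφ1 x' hx'0 yn hyb) ?_
        refine ENNReal.ofReal_le_ofReal ?_
        have hyne : yn ^ Real.logb b φ = (nn:ℝ) ^ e := by
          rw [hyn, ← Real.rpow_mul hnn0, hedef]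
        have hx'q : x' ^ q ≤ x ^ q := Real.rpow_le_rpow hx'0 hx'x hq0
        rw [← hφdef, hyne]
        have hnn : (0:ℝ) ≤ (nn:ℝ) ^ e := Real.rpow_nonneg hnn0 _
        rw [hcdef]
        gcongr
    calc (∑' nn : ℕ, P {ω | nn < fragN W x' ω ^ m})
        ≤ ∑' nn : ℕ, ((if nn < b ^ m then (1:ℝ≥0∞) else 0) + ENNReal.ofReal (c * (nn:ℝ) ^ e)) :=
          ENNReal.tsum_le_tsum hterm
      _ = (∑' nn : ℕ, (if nn < b ^ m then (1:ℝ≥0∞) else 0)) +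
          ∑' nn : ℕ, ENNReal.ofReal (c * (nn:ℝ) ^ e) := ENNReal.tsum_add
      _ = D := by
          rw [hDdef]
          congr 1
          · have ht := tsum_eq_sum (L := SummationFilter.unconditional ℕ) (f := fun nn : ℕ => if nn < b ^ m then (1:ℝ≥0∞) else 0)
              (s := Finset.range (b ^ m))
              (fun nn hnn => if_neg (fun h => hnn (Finset.mem_range.mpr h)))
            rw [ht, Finset.sum_congr rfl (fun nn hnn => if_pos (Finset.mem_range.mp hnn))]
            simp
          · rw [ENNReal.ofReal_tsum_of_nonneg
              (fun nn => mul_nonneg hc0 (Real.rpow_nonneg (Nat.cast_nonneg nn) e)) hsummable]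
  constructor
  · exact lt_of_le_of_lt (hbound x ⟨hx, le_refl x⟩) hD
  · exact lt_of_le_of_lt (iSup₂_le fun y hy => hbound y hy) hD
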